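/- For |q|<1, ∑_{n≥0} q^{2n+1} (q^{2n+6};q^2)_∞ (q^{2n+2};q^2)_∞ / (q^{2n+1};q^2)_∞^2 = q(1+q+q^2-q^3)/((1-q)(1-q^3)^2). -/

import Mathlib

open scoped BigOperators

noncomputable def qPoch (a q : ℂ) (n : ℕ) : ℂ := ∏ j ∈ Finset.range n, (1 - a * q ^ j)

noncomputable def qPochInf (a q : ℂ) : ℂ := ∏' j : ℕ, (1 - a * q ^ j)

/-! Write `P a = (a; q²)_∞` and `r a = P (a q) P (a q⁵) / P a ^ 2`, so that the `n`-th summand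
is `a r a` at `a = q^(2n+1)`. The ratio `r (a q²) / r a = (1 - a)² / ((1 - a q)(1 - a q⁵))` is
rational in `a`, and Gosper's algorithm yields an antidifference `G a = (a - q) Q(a) r a`, with `Q`
a quadratic polynomial in `a`, such that `(1 - q)(1 - q³)² a r a = G a - G (a q²)`. The series
therefore telescopes to `G q - lim_{a → 0} G a = q Q(0)`, since `G q = 0` and `r a → 1`. -/

open Filter Topology

theorem tsum_eq_sub_of_eq_sub_succ {E : Type*} [AddCommGroup E] [TopologicalSpace E]
    [IsTopologicalAddGroup E] [T2Space E] {f G : ℕ → E} {l : E} (hf : Summable f)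
    (hfG : ∀ n, f n = G n - G (n + 1)) (hG : Tendsto G atTop (𝓝 l)) :
    ∑' n, f n = G 0 - l :=
  tendsto_nhds_unique hf.hasSum.tendsto_sum_nat <| by
    simpa only [funext hfG, Finset.sum_range_sub'] using tendsto_const_nhds.sub hG

section QPochhammer

variable {t : ℂ}

theorem norm_pow_lt_one (ht : ‖t‖ < 1) {k : ℕ} (hk : k ≠ 0) : ‖t ^ k‖ < 1 := by
  rw [norm_pow]
  exact pow_lt_one₀ (norm_nonneg t) ht hk

theorem pow_ne_one_of_norm_lt_one (ht : ‖t‖ < 1) {k : ℕ} (hk : k ≠ 0) : t ^ k ≠ 1 :=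
  fun h => (norm_pow_lt_one ht hk).ne (by rw [h, norm_one])

theorem summable_norm_mul_pow (a : ℂ) (ht : ‖t‖ < 1) :
    Summable fun j : ℕ => ‖a * t ^ j‖ := by
  simpa [norm_mul, norm_pow] using
    (summable_geometric_of_lt_one (norm_nonneg t) ht).mul_left ‖a‖

theorem multipliable_one_sub_mul_pow (a : ℂ) (ht : ‖t‖ < 1) :
    Multipliable fun j : ℕ => 1 - a * t ^ j := by
  simpa [sub_eq_add_neg] using multipliable_one_add_of_summable (f := fun j => -(a * t ^ j))
    (by simpa using summable_norm_mul_pow a ht)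

theorem qPochInf_eq_one_sub_mul (a : ℂ) (ht : ‖t‖ < 1) :
    qPochInf a t = (1 - a) * qPochInf (a * t) t := by
  have hshift : ∀ j : ℕ, 1 - a * t ^ (j + 1) = 1 - a * t * t ^ j := fun j => by ring
  rw [qPochInf, tprod_eq_zero_mul' ?_]
  · simp only [pow_zero, mul_one, hshift, qPochInf]
  · simpa only [hshift] using multipliable_one_sub_mul_pow (a * t) ht

theorem tendsto_qPochInf_nhds_zero (ht : ‖t‖ < 1) :
    Tendsto (fun a => qPochInf a t) (𝓝 0) (𝓝 1) := by
  have hball : ∀ᶠ a : ℂ in 𝓝 0, ‖a‖ ≤ 1 := by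
    filter_upwards [Metric.closedBall_mem_nhds (0 : ℂ) one_pos] with a ha
    simpa using ha
  have := tendsto_tprod_one_add_of_dominated_convergence (f := fun a j => -(a * t ^ j)) (g := 0)
    (summable_geometric_of_lt_one (norm_nonneg t) ht)
    (fun j => Continuous.tendsto' (by fun_prop) 0 _ (by simp))
    (hball.mono fun a ha j => by
      simpa [norm_mul, norm_pow] using mul_le_of_le_one_left (by positivity) ha)
  simpa [qPochInf, sub_eq_add_neg] using this

end QPochhammer

section Telescoping

variable (q : ℂ)

noncomputable def pochRatio (a : ℂ) : ℂ :=
  qPochInf (a * q) (q ^ 2) * qPochInf (a * q ^ 5) (q ^ 2) / qPochInf a (q ^ 2) ^ 2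

def gosperPoly (a : ℂ) : ℂ :=
  (1 + q + q ^ 2 - q ^ 3) - (q + q ^ 2 + q ^ 3 + q ^ 4 + q ^ 5 - q ^ 6) * a +
    (q ^ 4 + q ^ 5) * a ^ 2

noncomputable def antidiff (a : ℂ) : ℂ := (a - q) * gosperPoly q a * pochRatio q a

variable {q}

theorem one_sub_sq_mul_pochRatio (hq : ‖q‖ < 1) {a : ℂ} (ha : a ≠ 1) :
    (1 - a) ^ 2 * pochRatio q a = (1 - a * q) * (1 - a * q ^ 5) * pochRatio q (a * q ^ 2) := by
  have hq2 := norm_pow_lt_one hq two_ne_zero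
  rw [pochRatio, pochRatio, qPochInf_eq_one_sub_mul a hq2, qPochInf_eq_one_sub_mul (a * q) hq2,
    qPochInf_eq_one_sub_mul (a * q ^ 5) hq2, show a * q * q ^ 2 = a * q ^ 2 * q by ring,
    show a * q ^ 5 * q ^ 2 = a * q ^ 2 * q ^ 5 by ring]
  rcases eq_or_ne (qPochInf (a * q ^ 2) (q ^ 2)) 0 with h | h
  · simp [h]
  · field_simp

theorem antidiff_sub_antidiff_mul (hq : ‖q‖ < 1) {a : ℂ} (ha : a ≠ 1) :
    antidiff q a - antidiff q (a * q ^ 2) = (1 - q) * (1 - q ^ 3) ^ 2 * (a * pochRatio q a) := by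
  refine mul_left_cancel₀ (pow_ne_zero 2 (sub_ne_zero.2 ha.symm)) ?_
  unfold antidiff
  linear_combination (norm := (simp only [gosperPoly]; ring))
    ((a - q) * gosperPoly q a - (1 - q) * (1 - q ^ 3) ^ 2 * a) * one_sub_sq_mul_pochRatio hq ha

theorem tendsto_pochRatio_nhds_zero (hq : ‖q‖ < 1) :
    Tendsto (pochRatio q) (𝓝 0) (𝓝 1) := by
  have hP := tendsto_qPochInf_nhds_zero (norm_pow_lt_one hq two_ne_zero)
  have hmul : ∀ c : ℂ, Tendsto (fun a => qPochInf (a * c) (q ^ 2)) (𝓝 0) (𝓝 1) := fun c =>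
    hP.comp (by simpa using (tendsto_id (x := 𝓝 (0 : ℂ))).mul_const c)
  have := ((hmul q).mul (hmul (q ^ 5))).div (hP.pow 2) (by simp)
  rwa [one_mul, one_pow, div_one] at this

theorem tendsto_antidiff_nhds_zero (hq : ‖q‖ < 1) :
    Tendsto (antidiff q) (𝓝 0) (𝓝 (-q * (1 + q + q ^ 2 - q ^ 3))) := by
  have hpoly : Tendsto (fun a => (a - q) * gosperPoly q a) (𝓝 0)
      (𝓝 (-q * (1 + q + q ^ 2 - q ^ 3))) :=
    Continuous.tendsto' (by unfold gosperPoly; fun_prop) 0 _ (by simp [gosperPoly])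
  have := hpoly.mul (tendsto_pochRatio_nhds_zero hq)
  rwa [mul_one] at this

theorem antidiff_self : antidiff q q = 0 := by simp [antidiff]

theorem tendsto_pow_two_mul_add_one (hq : ‖q‖ < 1) :
    Tendsto (fun n : ℕ => q ^ (2 * n + 1)) atTop (𝓝 0) := by
  simpa only [← pow_mul, ← pow_succ', mul_zero] using
    (tendsto_pow_atTop_nhds_zero_of_norm_lt_one (norm_pow_lt_one hq two_ne_zero)).const_mul q

theorem summable_pow_mul_pochRatio (hq : ‖q‖ < 1) :
    Summable fun n : ℕ => q ^ (2 * n + 1) * pochRatio q (q ^ (2 * n + 1)) :=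
  Summable.mul_tendsto_const
    (by simpa only [← pow_mul, ← pow_succ'] using
      summable_norm_mul_pow q (norm_pow_lt_one hq two_ne_zero))
    (Nat.cofinite_eq_atTop ▸
      (tendsto_pochRatio_nhds_zero hq).comp (tendsto_pow_two_mul_add_one hq))

end Telescoping

theorem stmt_16 (q : ℂ) (hq : ‖q‖ < 1) :
    (∑' n : ℕ, q ^ (2 * n + 1) * qPochInf (q ^ (2 * n + 6)) (q ^ 2) *
        qPochInf (q ^ (2 * n + 2)) (q ^ 2) / (qPochInf (q ^ (2 * n + 1)) (q ^ 2)) ^ 2) =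
      q * (1 + q + q ^ 2 - q ^ 3) / ((1 - q) * (1 - q ^ 3) ^ 2) := by
  have hterm : ∀ n : ℕ, q ^ (2 * n + 1) * qPochInf (q ^ (2 * n + 6)) (q ^ 2) *
      qPochInf (q ^ (2 * n + 2)) (q ^ 2) / (qPochInf (q ^ (2 * n + 1)) (q ^ 2)) ^ 2 =
      q ^ (2 * n + 1) * pochRatio q (q ^ (2 * n + 1)) := fun n => by
    rw [pochRatio, ← pow_succ, ← pow_add]; ring
  have htel := tsum_eq_sub_of_eq_sub_succ
    ((summable_pow_mul_pochRatio hq).mul_left ((1 - q) * (1 - q ^ 3) ^ 2))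
    (fun n => by
      rw [Function.comp_apply, Function.comp_apply, show 2 * (n + 1) + 1 = 2 * n + 1 + 2 by ring,
        pow_add q (2 * n + 1) 2,
        antidiff_sub_antidiff_mul hq (pow_ne_one_of_norm_lt_one hq (2 * n).succ_ne_zero)])
    ((tendsto_antidiff_nhds_zero hq).comp (tendsto_pow_two_mul_add_one hq))
  rw [tsum_mul_left, Function.comp_apply, mul_zero, zero_add, pow_one, antidiff_self] at htel
  have h1 : (1 : ℂ) - q ≠ 0 :=
    sub_ne_zero.2 (by simpa using (pow_ne_one_of_norm_lt_one hq one_ne_zero).symm)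
  have h3 : (1 : ℂ) - q ^ 3 ≠ 0 :=
    sub_ne_zero.2 (pow_ne_one_of_norm_lt_one hq three_ne_zero).symm
  rw [tsum_congr hterm, eq_div_iff (mul_ne_zero h1 (pow_ne_zero 2 h3))]
  linear_combination htel
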